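/- arXiv:1907.04465 — 2 statements merged into one kernel-verified Lean document; each statement's English description precedes it below -/
import Mathlib

section
/- Let a, b, c ∈ ℝ with a < b < 0, c > 0 and 2 < a/b < (c/(2b))² + 2. Then Δ > 0 and the real roots of f₁ are exactly 0, z₁ = c/(2b) − √Δ and z₂ = c/(2b) + √Δ; they are pairwise distinct and satisfy z₁ < z₂ < 0; moreover β₂(0)β₃(0) < 0, β₂(z₁)β₃(z₁) < 0 and β₂(z₂)β₃(z₂) > 0, i.e. the root z₂ is a node lying between two saddle-type roots (Darbouxian type D₂). -/
noncomputable section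

/-- `Δ = (c/(2b))² − a/b + 2`. -/
def disc (a b c : ℝ) : ℝ := (c / (2 * b)) ^ 2 - a / b + 2

/-- The cubic `f₁(z) = b z³ − c z² + (a − 2b) z`. -/
def cubicF (a b c z : ℝ) : ℝ := b * z ^ 3 - c * z ^ 2 + (a - 2 * b) * z

/-- `β₂(z) = 2b z² − c z + (a − b)`. -/
def beta2 (a b c z : ℝ) : ℝ := 2 * b * z ^ 2 - c * z + (a - b)

/-- `β₃(z) = −3b z² + 2c z + (2b − a)`. -/
def beta3 (a b c z : ℝ) : ℝ := -3 * b * z ^ 2 + 2 * c * z + (2 * b - a)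

/-! On the roots of the quadratic factor `q(z) = b z² − c z + (a − 2b)` of `f₁ = z · q`,
the eigenvalues simplify to `β₂ = b (z² + 1)` and `β₃ = z (c − 2bz)`. For `b < 0` and `z < 0`
the sign of `β₂ β₃` is therefore that of `c − 2bz`, which equals `± 2b√Δ` at `z = c/(2b) ∓ √Δ`.
The hypothesis `a/b > 2` is exactly `√Δ < −c/(2b)`, which puts both nonzero roots on the
negative axis. -/

section Roots

variable {a b c m s z : ℝ}

theorem cubicF_eq_mul_quadratic (a b c z : ℝ) :
    cubicF a b c z = z * (b * z ^ 2 - c * z + (a - 2 * b)) := by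
  unfold cubicF; ring

theorem mul_sq_sub_disc (hb : b ≠ 0) : b * ((c / (2 * b)) ^ 2 - disc a b c) = a - 2 * b := by
  unfold disc; field_simp; ring

variable (hm : 2 * b * m = c) (hs : b * (m ^ 2 - s ^ 2) = a - 2 * b)
include hm hs

theorem quadratic_eq_mul_sub_mul_sub :
    b * z ^ 2 - c * z + (a - 2 * b) = b * (z - (m - s)) * (z - (m + s)) := by
  linear_combination z * hm - hs

theorem quadratic_eq_zero_iff_of_ne (hb : b ≠ 0) :
    b * z ^ 2 - c * z + (a - 2 * b) = 0 ↔ z = m - s ∨ z = m + s := by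
  rw [quadratic_eq_mul_sub_mul_sub hm hs]
  simp only [mul_eq_zero, hb, false_or, sub_eq_zero]

theorem cubicF_eq_zero_iff (hb : b ≠ 0) :
    cubicF a b c z = 0 ↔ z = 0 ∨ z = m - s ∨ z = m + s := by
  rw [cubicF_eq_mul_quadratic, mul_eq_zero, quadratic_eq_zero_iff_of_ne hm hs hb]

end Roots

section Eigenvalues

variable {a b c z : ℝ}

theorem beta2_mul_beta3_eq_of_quadratic_eq_zero (hq : b * z ^ 2 - c * z + (a - 2 * b) = 0) :
    beta2 a b c z * beta3 a b c z = b * (z ^ 2 + 1) * z * (c - 2 * b * z) := by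
  have h2 : beta2 a b c z = b * (z ^ 2 + 1) := by unfold beta2; linear_combination hq
  have h3 : beta3 a b c z = z * (c - 2 * b * z) := by unfold beta3; linear_combination -hq
  rw [h2, h3]; ring

theorem beta2_mul_beta3_neg_of_quadratic_eq_zero (hb : b < 0) (hz : z < 0)
    (hq : b * z ^ 2 - c * z + (a - 2 * b) = 0) (hslope : c < 2 * b * z) :
    beta2 a b c z * beta3 a b c z < 0 := by
  rw [beta2_mul_beta3_eq_of_quadratic_eq_zero hq]
  have hcoef : 0 < b * (z ^ 2 + 1) * z :=
    mul_pos_of_neg_of_neg (mul_neg_of_neg_of_pos hb (by positivity)) hz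
  exact mul_neg_of_pos_of_neg hcoef (by linarith)

theorem beta2_mul_beta3_pos_of_quadratic_eq_zero (hb : b < 0) (hz : z < 0)
    (hq : b * z ^ 2 - c * z + (a - 2 * b) = 0) (hslope : 2 * b * z < c) :
    0 < beta2 a b c z * beta3 a b c z := by
  rw [beta2_mul_beta3_eq_of_quadratic_eq_zero hq]
  have hcoef : 0 < b * (z ^ 2 + 1) * z :=
    mul_pos_of_neg_of_neg (mul_neg_of_neg_of_pos hb (by positivity)) hz
  exact mul_pos hcoef (by linarith)

theorem beta2_zero_mul_beta3_zero_neg (hb : b < 0) (ha : a < 2 * b) :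
    beta2 a b c 0 * beta3 a b c 0 < 0 := by
  unfold beta2 beta3
  exact mul_neg_of_neg_of_pos (by linarith) (by linarith)

end Eigenvalues

theorem stmt2_general (a b c : ℝ) (hb : b < 0) (hc : 0 < c)
    (h1 : 2 < a / b) (h2 : a / b < (c / (2 * b)) ^ 2 + 2) :
    0 < disc a b c ∧
    ({z : ℝ | cubicF a b c z = 0} =
      {0, c / (2 * b) - Real.sqrt (disc a b c), c / (2 * b) + Real.sqrt (disc a b c)}) ∧
    (c / (2 * b) - Real.sqrt (disc a b c) ≠ 0 ∧
      c / (2 * b) + Real.sqrt (disc a b c) ≠ 0 ∧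
      c / (2 * b) - Real.sqrt (disc a b c) ≠ c / (2 * b) + Real.sqrt (disc a b c)) ∧
    (c / (2 * b) - Real.sqrt (disc a b c) < c / (2 * b) + Real.sqrt (disc a b c) ∧
      c / (2 * b) + Real.sqrt (disc a b c) < 0) ∧
    beta2 a b c 0 * beta3 a b c 0 < 0 ∧
    beta2 a b c (c / (2 * b) - Real.sqrt (disc a b c)) *
      beta3 a b c (c / (2 * b) - Real.sqrt (disc a b c)) < 0 ∧
    0 < beta2 a b c (c / (2 * b) + Real.sqrt (disc a b c)) *
      beta3 a b c (c / (2 * b) + Real.sqrt (disc a b c)) := by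
  have hd : 0 < disc a b c := by unfold disc; linarith
  set m := c / (2 * b)
  set s := Real.sqrt (disc a b c)
  have hm : 2 * b * m = c := mul_div_cancel₀ c (by linarith)
  have hs : b * (m ^ 2 - s ^ 2) = a - 2 * b := by
    rw [Real.sq_sqrt hd.le]; exact mul_sq_sub_disc hb.ne
  have hs_pos : 0 < s := Real.sqrt_pos.2 hd
  have hm_neg : m < 0 := div_neg_of_pos_of_neg hc (by linarith)
  have hsm : s < -m := (Real.sqrt_lt' (by linarith)).2 (by unfold disc; rw [neg_sq]; linarith)
  clear_value m s
  have hbs : b * s < 0 := mul_neg_of_neg_of_pos hb hs_pos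
  have hroot := fun z => quadratic_eq_zero_iff_of_ne (z := z) hm hs hb.ne
  refine ⟨hd, ?_, ⟨by linarith, by linarith, by linarith⟩, ⟨by linarith, by linarith⟩, ?_, ?_, ?_⟩
  · ext z
    simp only [Set.mem_ofPred_eq, Set.mem_insert_iff, Set.mem_singleton_iff]
    exact cubicF_eq_zero_iff hm hs hb.ne
  · exact beta2_zero_mul_beta3_zero_neg hb ((lt_div_iff_of_neg hb).1 h1)
  · exact beta2_mul_beta3_neg_of_quadratic_eq_zero hb (by linarith) ((hroot _).2 (.inl rfl))
      (by linear_combination -hm + 2 * hbs)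
  · exact beta2_mul_beta3_pos_of_quadratic_eq_zero hb (by linarith) ((hroot _).2 (.inr rfl))
      (by linear_combination hm + 2 * hbs)

theorem stmt2 (a b c : ℝ) (hab : a < b) (hb : b < 0) (hc : 0 < c)
    (h1 : 2 < a / b) (h2 : a / b < (c / (2 * b)) ^ 2 + 2) :
    0 < disc a b c ∧
    ({z : ℝ | cubicF a b c z = 0} =
      {0, c / (2 * b) - Real.sqrt (disc a b c), c / (2 * b) + Real.sqrt (disc a b c)}) ∧
    (c / (2 * b) - Real.sqrt (disc a b c) ≠ 0 ∧
      c / (2 * b) + Real.sqrt (disc a b c) ≠ 0 ∧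
      c / (2 * b) - Real.sqrt (disc a b c) ≠ c / (2 * b) + Real.sqrt (disc a b c)) ∧
    (c / (2 * b) - Real.sqrt (disc a b c) < c / (2 * b) + Real.sqrt (disc a b c) ∧
      c / (2 * b) + Real.sqrt (disc a b c) < 0) ∧
    beta2 a b c 0 * beta3 a b c 0 < 0 ∧
    beta2 a b c (c / (2 * b) - Real.sqrt (disc a b c)) *
      beta3 a b c (c / (2 * b) - Real.sqrt (disc a b c)) < 0 ∧
    0 < beta2 a b c (c / (2 * b) + Real.sqrt (disc a b c)) *
      beta3 a b c (c / (2 * b) + Real.sqrt (disc a b c)) :=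
  stmt2_general a b c hb hc h1 h2
end
end

section
/- Let a, b, c ∈ ℝ with a > b > 0, c > 0 and 2 < a/b < (c/(2b))² + 2. Then Δ > 0, the real roots of f₁ are exactly 0, z₁ = c/(2b) − √Δ and z₂ = c/(2b) + √Δ, these roots are pairwise distinct and satisfy 0 < z₁ < z₂, and the roots 0 and z₂ are of saddle type: β₂(0)β₃(0) = (a − b)(2b − a) < 0 and β₂(z₂)β₃(z₂) < 0. -/
noncomputable section

/-! With `m = c/(2b)`, the cubic factors as `f₁(z) = b z (z − (m − √Δ)) (z − (m + √Δ))`, and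
`Δ < m²` exactly when `a/b > 2`, which puts both nonzero roots on the positive axis.
At a nonzero root the quadratic factor `b z² − c z + (a − 2b)` vanishes; subtracting it reduces
`β₂(z)` to `b (z² + 1) > 0` and `β₃(z)` to `z (c − 2bz)`, and `c − 2b z₂ = −2b√Δ < 0`. -/

section

variable {a b c : ℝ}

theorem cubicF_eq_mul_sub_mul_sub {s : ℝ} (hb : b ≠ 0) (hs : s ^ 2 = disc a b c) (z : ℝ) :
    cubicF a b c z = b * z * (z - (c / (2 * b) - s)) * (z - (c / (2 * b) + s)) := by
  unfold cubicF
  unfold disc at hs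
  field_simp at hs ⊢
  linear_combination z * hs

theorem setOf_cubicF_eq_zero {s : ℝ} (hb : b ≠ 0) (hs : s ^ 2 = disc a b c) :
    {z : ℝ | cubicF a b c z = 0} = {0, c / (2 * b) - s, c / (2 * b) + s} := by
  ext z
  simp only [Set.mem_ofPred_eq, cubicF_eq_mul_sub_mul_sub hb hs z, Set.mem_insert_iff,
    Set.mem_singleton_iff, mul_eq_zero, sub_eq_zero, hb, false_or, or_assoc]

theorem disc_pos (h : a / b < (c / (2 * b)) ^ 2 + 2) : 0 < disc a b c := by
  unfold disc
  linarith

theorem sqrt_disc_lt (hm : 0 < c / (2 * b)) (h : 2 < a / b) :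
    Real.sqrt (disc a b c) < c / (2 * b) := by
  rw [Real.sqrt_lt' hm, disc]
  linarith

theorem beta2_zero_mul_beta3_zero : beta2 a b c 0 * beta3 a b c 0 = (a - b) * (2 * b - a) := by
  unfold beta2 beta3
  ring

theorem beta2_mul_beta3_of_cubicF_eq_zero {z : ℝ} (hz : z ≠ 0) (h : cubicF a b c z = 0) :
    beta2 a b c z * beta3 a b c z = b * (z ^ 2 + 1) * (z * (c - 2 * b * z)) := by
  have hq : b * z ^ 2 - c * z + (a - 2 * b) = 0 := by
    refine (mul_eq_zero.1 ?_).resolve_left hz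
    rw [← h, cubicF]
    ring
  have h2 : beta2 a b c z = b * (z ^ 2 + 1) := by
    unfold beta2
    linear_combination hq
  have h3 : beta3 a b c z = z * (c - 2 * b * z) := by
    unfold beta3
    linear_combination -hq
  rw [h2, h3]

end

theorem stmt4_general (a b c : ℝ) (hb : 0 < b) (hc : 0 < c)
    (h1 : 2 < a / b) (h2 : a / b < (c / (2 * b)) ^ 2 + 2) :
    0 < disc a b c ∧
    ({z : ℝ | cubicF a b c z = 0} =
      {0, c / (2 * b) - Real.sqrt (disc a b c), c / (2 * b) + Real.sqrt (disc a b c)}) ∧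
    (c / (2 * b) - Real.sqrt (disc a b c) ≠ 0 ∧
      c / (2 * b) + Real.sqrt (disc a b c) ≠ 0 ∧
      c / (2 * b) - Real.sqrt (disc a b c) ≠ c / (2 * b) + Real.sqrt (disc a b c)) ∧
    (0 < c / (2 * b) - Real.sqrt (disc a b c) ∧
      c / (2 * b) - Real.sqrt (disc a b c) < c / (2 * b) + Real.sqrt (disc a b c)) ∧
    beta2 a b c 0 * beta3 a b c 0 = (a - b) * (2 * b - a) ∧
    (a - b) * (2 * b - a) < 0 ∧
    beta2 a b c (c / (2 * b) + Real.sqrt (disc a b c)) *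
      beta3 a b c (c / (2 * b) + Real.sqrt (disc a b c)) < 0 := by
  have hΔ := disc_pos h2
  set m := c / (2 * b) with hm_def
  set s := Real.sqrt (disc a b c)
  have hm : 0 < m := by positivity
  have hs : 0 < s := Real.sqrt_pos.2 hΔ
  have hsm : s < m := sqrt_disc_lt hm h1
  have hs_sq : s ^ 2 = disc a b c := Real.sq_sqrt hΔ.le
  have hroots := setOf_cubicF_eq_zero hb.ne' hs_sq
  have h2b : 2 * b < a := by rwa [lt_div_iff₀ hb] at h1
  have hz₂ : m + s ≠ 0 := by positivity
  have hz₂_root : cubicF a b c (m + s) = 0 := by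
    rw [cubicF_eq_mul_sub_mul_sub hb.ne' hs_sq, sub_self, mul_zero]
  have hslope : c - 2 * b * (m + s) = -(2 * b * s) := by
    rw [hm_def]
    field_simp
    ring
  refine ⟨hΔ, hroots, ⟨by linarith, hz₂, by linarith⟩, ⟨by linarith, by linarith⟩,
    beta2_zero_mul_beta3_zero, mul_neg_of_pos_of_neg (by linarith) (by linarith), ?_⟩
  rw [beta2_mul_beta3_of_cubicF_eq_zero hz₂ hz₂_root, hslope]
  exact mul_neg_of_pos_of_neg (by positivity)
    (mul_neg_of_pos_of_neg (by positivity) (neg_neg_of_pos (by positivity)))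

theorem stmt4 (a b c : ℝ) (hba : b < a) (hb : 0 < b) (hc : 0 < c)
    (h1 : 2 < a / b) (h2 : a / b < (c / (2 * b)) ^ 2 + 2) :
    0 < disc a b c ∧
    ({z : ℝ | cubicF a b c z = 0} =
      {0, c / (2 * b) - Real.sqrt (disc a b c), c / (2 * b) + Real.sqrt (disc a b c)}) ∧
    (c / (2 * b) - Real.sqrt (disc a b c) ≠ 0 ∧
      c / (2 * b) + Real.sqrt (disc a b c) ≠ 0 ∧
      c / (2 * b) - Real.sqrt (disc a b c) ≠ c / (2 * b) + Real.sqrt (disc a b c)) ∧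
    (0 < c / (2 * b) - Real.sqrt (disc a b c) ∧
      c / (2 * b) - Real.sqrt (disc a b c) < c / (2 * b) + Real.sqrt (disc a b c)) ∧
    beta2 a b c 0 * beta3 a b c 0 = (a - b) * (2 * b - a) ∧
    (a - b) * (2 * b - a) < 0 ∧
    beta2 a b c (c / (2 * b) + Real.sqrt (disc a b c)) *
      beta3 a b c (c / (2 * b) + Real.sqrt (disc a b c)) < 0 :=
  stmt4_general a b c hb hc h1 h2
end
end
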